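/- There exists a constant C > 0 such that for every a ∈ 𝔻, every 0 < ρ ≤ 1/2 with E(a,ρ) ⊂ 𝔻, every nonnegative integer n, every f analytic on 𝔻, and every z ∈ E(a, ρ/2): |f^{(n)}(z) - f^{(n)}(a)| ≤ C · |z - a| / (ρ(1-|a|)) · (1/A(E(a,ρ))) · ∫_{E(a,ρ)} |f^{(n)}(u)| dA(u). -/

import Mathlib

open Complex MeasureTheory Real Set Metric ComplexConjugate

/-- Euclidean disk `E(a,ρ) = {z ∈ 𝔻 : |z-a| < ρ(1-|a|²)}`. -/
def eDisk (a : ℂ) (ρ : ℝ) : Set ℂ :=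
  {z ∈ Metric.ball (0:ℂ) 1 | ‖z - a‖ < ρ * (1 - ‖a‖^2)}

/-- Lebesgue area measure of a planar set. -/
noncomputable def area (S : Set ℂ) : ℝ := (MeasureTheory.volume S).toReal

/-!
Integrating the mean value property over circles (in polar coordinates) gives the sub-mean value
property `π s² ‖g c‖ ≤ ∫_{B(c,s)} ‖g‖` of a holomorphic `g`. For `w ∈ B(a, R/2)` every point of the
circle `|ζ - w| = R/4` carries a disk `B(ζ, R/4) ⊆ B(a, R)`, so the Cauchy estimate bounds `g'` on
`B(a, R/2)` by `64 / (π R³) ∫_{B(a,R)} ‖g‖`, and the mean value inequality on the segment `[a, z]`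
finishes. For `E(a, ρ) = B(a, R)` with `R = ρ(1 - |a|²)` one has `ρ(1 - |a|) ≤ R`, and `ρ ≤ 1/2`
keeps the closed disk inside `𝔻`.
-/

variable {E : Type*} [NormedAddCommGroup E] [NormedSpace ℝ E]

theorem add_polarCoord_symm_eq_circleMap (c : ℂ) (p : ℝ × ℝ) :
    c + Complex.polarCoord.symm p = circleMap c p.1 p.2 := by
  simp [circleMap, Complex.polarCoord_symm_apply, Complex.exp_mul_I, ← Complex.ofReal_cos,
    ← Complex.ofReal_sin]

theorem circleMap_mem_ball_iff {c : ℂ} {r s : ℝ} (θ : ℝ) (hr : 0 < r) :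
    circleMap c r θ ∈ ball c s ↔ r < s := by
  rw [mem_ball, dist_eq_norm, circleMap_sub_center, norm_circleMap_zero, abs_of_pos hr]

theorem setIntegral_ball_eq_intervalIntegral_circleAverage {f : ℂ → E} {c : ℂ} {s : ℝ}
    (hs : 0 ≤ s) (hf : ContinuousOn f (closedBall c s)) :
    ∫ u in ball c s, f u = ∫ r in 0..s, (2 * π * r) • circleAverage f c r := by
  set F : ℝ × ℝ → E := fun p => p.1 • f (circleMap c p.1 p.2)
  have hF : IntegrableOn F (Icc 0 s ×ˢ Icc (-π) π) := by
    refine ContinuousOn.integrableOn_compact (isCompact_Icc.prod isCompact_Icc) ?_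
    refine continuousOn_fst.smul (hf.comp (by fun_prop) fun p hp => ?_)
    exact closedBall_subset_closedBall hp.1.2 (circleMap_mem_closedBall c hp.1.1 p.2)
  have hpolar : ∫ u in ball c s, f u = ∫ p in Ioo 0 s ×ˢ Ioo (-π) π, F p := by
    rw [← integral_indicator measurableSet_ball, ← integral_add_left_eq_self _ c,
      ← Complex.integral_comp_polarCoord_symm, polarCoord_target,
      setIntegral_congr_fun (g := (Iio s ×ˢ univ).indicator F)
        (measurableSet_Ioi.prod measurableSet_Ioo),
      setIntegral_indicator (measurableSet_Iio.prod MeasurableSet.univ), prod_inter_prod,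
      Ioi_inter_Iio, inter_univ]
    intro p hp
    simp only [F, add_polarCoord_symm_eq_circleMap, indicator, mem_prod, mem_Iio, mem_univ,
      and_true, circleMap_mem_ball_iff _ (mem_Ioi.1 hp.1)]
    split_ifs <;> simp
  have hfubini :
      ∫ p in Ioo 0 s ×ˢ Ioo (-π) π, F p = ∫ r in Ioo 0 s, ∫ θ in Ioo (-π) π, F (r, θ) :=
    setIntegral_prod F (hF.mono_set (prod_mono Ioo_subset_Icc_self Ioo_subset_Icc_self))
  have hcircle (r : ℝ) : ∫ θ in Ioo (-π) π, F (r, θ) = (2 * π * r) • circleAverage f c r := by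
    have hper : Function.Periodic (fun θ => f (circleMap c r θ)) (2 * π) :=
      fun θ => by simp [periodic_circleMap c r θ]
    have hshift := hper.intervalIntegral_add_eq (-π) 0
    rw [neg_add_eq_sub, two_mul, add_sub_cancel_right, zero_add, ← two_mul] at hshift
    rw [circleAverage_def, smul_smul, mul_comm (2 * π), mul_assoc, mul_inv_cancel₀ two_pi_pos.ne',
      mul_one, ← integral_Ioc_eq_integral_Ioo,
      ← intervalIntegral.integral_of_le (by linarith [pi_pos]), intervalIntegral.integral_smul,
      ← hshift]
  rw [hpolar, hfubini, intervalIntegral.integral_of_le hs, integral_Ioc_eq_integral_Ioo]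
  simp_rw [hcircle]

theorem norm_circleAverage_le (f : ℂ → E) (c : ℂ) (R : ℝ) :
    ‖circleAverage f c R‖ ≤ circleAverage (fun z => ‖f z‖) c R := by
  rw [circleAverage_def, circleAverage_def, norm_smul, Real.norm_of_nonneg (by positivity),
    smul_eq_mul]
  gcongr
  exact intervalIntegral.norm_integral_le_integral_norm two_pi_pos.le

section Holomorphic

variable {F : Type*} [NormedAddCommGroup F] [NormedSpace ℂ F] {g : ℂ → F}

theorem DiffContOnCl.integrableOn_norm_ball {c : ℂ} {R : ℝ} (hg : DiffContOnCl ℂ g (ball c R)) :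
    IntegrableOn (‖g ·‖) (ball c R) :=
  (hg.continuousOn_ball.norm.integrableOn_compact (isCompact_closedBall _ _)).mono_set
    ball_subset_closedBall

variable [CompleteSpace F]

theorem DiffContOnCl.norm_le_circleAverage_norm {c : ℂ} {R : ℝ}
    (hg : DiffContOnCl ℂ g (ball c |R|)) : ‖g c‖ ≤ Real.circleAverage (fun z => ‖g z‖) c R :=
  hg.circleAverage ▸ norm_circleAverage_le g c R

theorem DiffContOnCl.pi_mul_sq_mul_norm_le_setIntegral_norm {c : ℂ} {s : ℝ} (hs : 0 ≤ s)
    (hg : DiffContOnCl ℂ g (ball c s)) : π * s ^ 2 * ‖g c‖ ≤ ∫ u in ball c s, ‖g u‖ := by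
  have hcont : ContinuousOn (fun u => ‖g u‖) (closedBall c s) := hg.continuousOn_ball.norm
  have hmean : ∀ r ∈ Icc 0 s,
      (2 * π * r) * ‖g c‖ ≤ (2 * π * r) • Real.circleAverage (‖g ·‖) c r := fun r hr =>
    have hrs : |r| ≤ s := by rw [abs_of_nonneg hr.1]; exact hr.2
    mul_le_mul_of_nonneg_left (hg.mono (ball_subset_ball hrs)).norm_le_circleAverage_norm
      (mul_nonneg two_pi_pos.le hr.1)
  have hint :
      IntervalIntegrable (fun r => (2 * π * r) • Real.circleAverage (‖g ·‖) c r) volume 0 s := by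
    have hcircles : ContinuousOn (Real.circleAverage (‖g ·‖) c) (Icc 0 s) :=
      (hcont.mono fun z hz => mem_closedBall_iff_norm.2 hz.2).circleAverage fun r hr => hr.1
    exact ((continuousOn_const.mul continuousOn_id).smul hcircles).intervalIntegrable_of_Icc hs
  calc π * s ^ 2 * ‖g c‖ = ∫ r in 0..s, (2 * π * r) * ‖g c‖ := by
        rw [intervalIntegral.integral_mul_const, intervalIntegral.integral_const_mul, integral_id]
        ring
    _ ≤ ∫ r in 0..s, (2 * π * r) • Real.circleAverage (‖g ·‖) c r :=
        intervalIntegral.integral_mono_on hs (Continuous.intervalIntegrable (by fun_prop) _ _)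
          hint hmean
    _ = ∫ u in ball c s, ‖g u‖ := (setIntegral_ball_eq_intervalIntegral_circleAverage hs hcont).symm

theorem DiffContOnCl.norm_deriv_le_setIntegral_norm {w : ℂ} {r : ℝ} (hr : 0 < r)
    (hg : DiffContOnCl ℂ g (ball w (2 * r))) :
    ‖deriv g w‖ ≤ (∫ u in ball w (2 * r), ‖g u‖) / (π * r ^ 3) := by
  have hsphere : ∀ ζ ∈ sphere w r, ‖g ζ‖ ≤ (∫ u in ball w (2 * r), ‖g u‖) / (π * r ^ 2) := by
    intro ζ hζ
    have hball : ball ζ r ⊆ ball w (2 * r) := by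
      rw [two_mul, ← mem_sphere.1 hζ]
      exact ball_subset_ball' le_rfl
    rw [le_div_iff₀ (by positivity), mul_comm]
    calc π * r ^ 2 * ‖g ζ‖ ≤ ∫ u in ball ζ r, ‖g u‖ :=
          (hg.mono hball).pi_mul_sq_mul_norm_le_setIntegral_norm hr.le
      _ ≤ ∫ u in ball w (2 * r), ‖g u‖ :=
          setIntegral_mono_set hg.integrableOn_norm_ball (.of_forall fun _ => norm_nonneg _)
            hball.eventuallyLE
  calc ‖deriv g w‖ ≤ (∫ u in ball w (2 * r), ‖g u‖) / (π * r ^ 2) / r :=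
        norm_deriv_le_of_forall_mem_sphere_norm_le hr (hg.mono (ball_subset_ball (by linarith)))
          hsphere
    _ = (∫ u in ball w (2 * r), ‖g u‖) / (π * r ^ 3) := by
        rw [div_div]; ring

theorem DiffContOnCl.norm_sub_le_setIntegral_norm {a z : ℂ} {R : ℝ}
    (hg : DiffContOnCl ℂ g (ball a R)) (hz : z ∈ ball a (R / 2)) :
    ‖g z - g a‖ ≤ 64 * (‖z - a‖ / R) * ((∫ u in ball a R, ‖g u‖) / (π * R ^ 2)) := by
  have hR : 0 < R := by linarith [pos_of_mem_ball hz]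
  have hderiv : ∀ w ∈ ball a (R / 2),
      ‖deriv g w‖ ≤ (∫ u in ball a R, ‖g u‖) / (π * (R / 4) ^ 3) := by
    intro w hw
    have hball : ball w (2 * (R / 4)) ⊆ ball a R := by
      refine ball_subset_ball' ?_
      rw [mem_ball] at hw
      linarith
    calc ‖deriv g w‖ ≤ (∫ u in ball w (2 * (R / 4)), ‖g u‖) / (π * (R / 4) ^ 3) :=
          (hg.mono hball).norm_deriv_le_setIntegral_norm (by positivity)
      _ ≤ (∫ u in ball a R, ‖g u‖) / (π * (R / 4) ^ 3) := div_le_div_of_nonneg_right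
          (setIntegral_mono_set hg.integrableOn_norm_ball (.of_forall fun _ => norm_nonneg _)
            hball.eventuallyLE)
          (by positivity)
  have hdiff : ∀ w ∈ ball a (R / 2), DifferentiableAt ℂ g w := fun w hw =>
    hg.differentiableAt isOpen_ball (ball_subset_ball (by linarith) hw)
  calc ‖g z - g a‖ ≤ (∫ u in ball a R, ‖g u‖) / (π * (R / 4) ^ 3) * ‖z - a‖ :=
        (convex_ball a _).norm_image_sub_le_of_norm_deriv_le hdiff hderiv
          (mem_ball_self (by linarith)) hz
    _ = 64 * (‖z - a‖ / R) * ((∫ u in ball a R, ‖g u‖) / (π * R ^ 2)) := by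
        field_simp
        ring

end Holomorphic

theorem area_ball (a : ℂ) {R : ℝ} (hR : 0 ≤ R) : area (ball a R) = π * R ^ 2 := by
  rw [area, Complex.volume_ball, ENNReal.toReal_mul, ENNReal.toReal_pow,
    ENNReal.toReal_ofReal hR, ENNReal.coe_toReal, NNReal.coe_real_pi, mul_comm]

theorem eDisk_eq_ball {a : ℂ} {ρ : ℝ} (h : ball a (ρ * (1 - ‖a‖ ^ 2)) ⊆ ball 0 1) :
    eDisk a ρ = ball a (ρ * (1 - ‖a‖ ^ 2)) :=
  ext fun _ => ⟨fun hz => mem_ball_iff_norm.2 hz.2, fun hz => ⟨h hz, mem_ball_iff_norm.1 hz⟩⟩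

theorem closedBall_subset_ball_zero_one {a : ℂ} (ha : ‖a‖ < 1) {ρ : ℝ} (hρ : ρ ≤ 1 / 2) :
    closedBall a (ρ * (1 - ‖a‖ ^ 2)) ⊆ ball 0 1 := by
  intro z hz
  rw [mem_closedBall_iff_norm] at hz
  rw [mem_ball_zero_iff]
  have hR : ρ * (1 - ‖a‖ ^ 2) ≤ 1 / 2 * (1 - ‖a‖ ^ 2) :=
    mul_le_mul_of_nonneg_right hρ (by nlinarith [norm_nonneg a])
  nlinarith [norm_sub_norm_le z a, norm_nonneg a]

theorem stmt7 :
    ∃ C > 0, ∀ a ∈ Metric.ball (0:ℂ) 1, ∀ ρ : ℝ, 0 < ρ → ρ ≤ 1/2 →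
      Metric.ball a (ρ * (1 - ‖a‖^2)) ⊆ Metric.ball (0:ℂ) 1 →
      ∀ n : ℕ, ∀ f : ℂ → ℂ, DifferentiableOn ℂ f (Metric.ball 0 1) →
      ∀ z ∈ eDisk a (ρ/2),
        ‖iteratedDeriv n f z - iteratedDeriv n f a‖
          ≤ C * (‖z - a‖ / (ρ * (1 - ‖a‖))) *
              ((∫ u in eDisk a ρ, ‖iteratedDeriv n f u‖) / area (eDisk a ρ)) := by
  refine ⟨64, by norm_num, fun a ha ρ hρ hρ2 hball n f hf z hz => ?_⟩
  have ha1 : ‖a‖ < 1 := mem_ball_zero_iff.1 ha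
  have hR : 0 < ρ * (1 - ‖a‖ ^ 2) := mul_pos hρ (by nlinarith [norm_nonneg a])
  have hρR : ρ * (1 - ‖a‖) ≤ ρ * (1 - ‖a‖ ^ 2) := by
    nlinarith [mul_nonneg (mul_nonneg hρ.le (norm_nonneg a)) (sub_nonneg.2 ha1.le)]
  set R := ρ * (1 - ‖a‖ ^ 2)
  have hg : DifferentiableOn ℂ (iteratedDeriv n f) (ball 0 1) := by
    rw [iteratedDeriv_eq_iterate]
    exact ((hf.analyticOnNhd isOpen_ball).iterated_deriv n).differentiableOn
  have hgR : DiffContOnCl ℂ (iteratedDeriv n f) (ball a R) :=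
    .mk_ball (hg.mono (ball_subset_closedBall.trans (closedBall_subset_ball_zero_one ha1 hρ2)))
      (hg.continuousOn.mono (closedBall_subset_ball_zero_one ha1 hρ2))
  have hzR : z ∈ ball a (R / 2) := mem_ball_iff_norm.2 (by linarith [hz.2])
  calc _ ≤ 64 * (‖z - a‖ / R) * ((∫ u in ball a R, ‖iteratedDeriv n f u‖) / (π * R ^ 2)) :=
        hgR.norm_sub_le_setIntegral_norm hzR
    _ ≤ _ := by
        rw [eDisk_eq_ball hball, area_ball a hR.le]
        gcongr
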